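/- For all nonnegative integers i ≥ j, m_{i,j} = Σ_{k=0}^{i−j} m_{i+1,j+1+k}·M_{k;ω}. -/

import Mathlib

open scoped BigOperators

/-- Weighted count of Motzkin-type paths from (0,0) to (n,j): steps (1,1),(1,-1),(1,0),
horizontal steps weighted ω, staying weakly above the x-axis. -/
def motzkinM (ω : ℚ) : ℕ → ℤ → ℚ
  | 0, j => if j = 0 then 1 else 0
  | n+1, j => if j < 0 then 0 else
      motzkinM ω n (j-1) + ω * motzkinM ω n j + motzkinM ω n (j+1)

/-- Inverse Motzkin matrix entries: m i j is the coefficient of t^i in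
t^j * (1 + ω t + t^2)⁻¹ ^ (j+1). -/
noncomputable def minv (ω : ℚ) (i j : ℕ) : ℚ :=
  PowerSeries.coeff (R := ℚ) i ((PowerSeries.X : PowerSeries ℚ) ^ j *
    ((1 + PowerSeries.C (R := ℚ) ω * PowerSeries.X + PowerSeries.X ^ 2)⁻¹) ^ (j + 1))

/-! With `Q = 1 + ωt + t²` and `u = t/Q`, the entry `m_{i,j}` is `[t^i] u^j Q⁻¹`.
The generating functions `G_j(x) = ∑ₙ M_{n,j} xⁿ` of paths ending at height `j` satisfy the
tridiagonal system `G_j = δ_{j0} + x (G_{j-1} + ω G_j + G_{j+1})`, and so do the series `t^j Q`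
after substituting `x = u`. Since `u` has no constant term, this system has only one solution,
so `G_j(u) = t^j Q`; for `j = 0` this is the functional equation `μ(u) = Q`. Hence
`∑_k m_{i+1,j+1+k} M_k = [t^{i+1}] u^{j+1} Q⁻¹ μ(u) = [t^{i+1}] t^{j+1} Q^{-j-1} = m_{i,j}`,
where cutting the sum off at `k = i - j` changes nothing because `u^{j+1+k}` has order `j+1+k`. -/

open PowerSeries Finset

section
variable {R : Type*} [CommRing R]

theorem PowerSeries.eq_zero_of_three_term_recurrence {c : R} {v : R⟦X⟧} {D : ℕ → R⟦X⟧}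
    (h_zero : D 0 = X * v * (c • D 0 + D 1))
    (h_succ : ∀ j, D (j + 1) = X * v * (D j + c • D (j + 1) + D (j + 2))) (j : ℕ) :
    D j = 0 := by
  have hdvd : ∀ n j, X ^ n ∣ D j := by
    intro n
    induction n with
    | zero => simp
    | succ n ih =>
      intro j
      rw [pow_succ']
      cases j with
      | zero =>
        rw [h_zero]
        exact mul_dvd_mul (dvd_mul_right X v) (dvd_add (dvd_smul_of_dvd c (ih 0)) (ih 1))
      | succ j =>
        rw [h_succ]
        exact mul_dvd_mul (dvd_mul_right X v)
          (dvd_add (dvd_add (ih j) (dvd_smul_of_dvd c (ih (j + 1)))) (ih (j + 2)))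
  ext m
  simpa using X_pow_dvd_iff.mp (hdvd (m + 1) j) m (by omega)

theorem PowerSeries.coeff_mul_subst_eq_sum {F u A : R⟦X⟧} (hu : constantCoeff u = 0) {a n N : ℕ}
    (hA : X ^ a ∣ A) (hn : n ≤ a + N) :
    coeff n (A * F.subst u) = ∑ k ∈ range (N + 1), coeff k F * coeff n (A * u ^ k) := by
  have hsub : HasSubst u := HasSubst.of_constantCoeff_zero' hu
  set G : R⟦X⟧ := mk fun i ↦ coeff (i + (N + 1)) F
  have hsplit : F.subst u = u ^ (N + 1) * G.subst u + ∑ k ∈ range (N + 1), coeff k F • u ^ k := by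
    conv_lhs => rw [eq_X_pow_mul_shift_add_trunc (N + 1) F]
    rw [subst_add hsub, subst_mul hsub, subst_pow hsub, subst_X hsub, subst_coe hsub,
      Polynomial.aeval_eq_sum_range' (natDegree_trunc_lt F N)]
    refine congrArg _ (sum_congr rfl fun k hk ↦ ?_)
    rw [coeff_trunc, if_pos (mem_range.mp hk)]
  have htail : coeff n (A * (u ^ (N + 1) * G.subst u)) = 0 := by
    have : X ^ (a + (N + 1)) ∣ A * (u ^ (N + 1) * G.subst u) := by
      rw [pow_add, ← mul_assoc]
      exact dvd_mul_of_dvd_left (mul_dvd_mul hA (pow_dvd_pow_of_dvd (X_dvd_iff.mpr hu) _)) _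
    exact X_pow_dvd_iff.mp this n (by omega)
  rw [hsplit, mul_add, map_add, htail, zero_add, mul_sum, map_sum]
  refine sum_congr rfl fun k _ ↦ ?_
  rw [mul_smul_comm, coeff_smul, smul_eq_mul]
end

lemma motzkinM_of_neg (ω : ℚ) (n : ℕ) {j : ℤ} (hj : j < 0) : motzkinM ω n j = 0 := by
  cases n <;> simp [motzkinM, hj, hj.ne]

lemma motzkinM_succ (ω : ℚ) (n : ℕ) {j : ℤ} (hj : 0 ≤ j) :
    motzkinM ω (n + 1) j = motzkinM ω n (j - 1) + ω * motzkinM ω n j + motzkinM ω n (j + 1) := by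
  rw [motzkinM, if_neg hj.not_gt]

noncomputable def motzkinGF (ω : ℚ) (j : ℕ) : ℚ⟦X⟧ := mk fun n ↦ motzkinM ω n j

lemma motzkinGF_zero (ω : ℚ) :
    motzkinGF ω 0 = 1 + X * (ω • motzkinGF ω 0 + motzkinGF ω 1) := by
  ext (_ | n)
  · simp [motzkinGF, motzkinM]
  · simp [motzkinGF, coeff_succ_X_mul, motzkinM_succ, motzkinM_of_neg]

lemma motzkinGF_succ (ω : ℚ) (j : ℕ) :
    motzkinGF ω (j + 1) =
      X * (motzkinGF ω j + ω • motzkinGF ω (j + 1) + motzkinGF ω (j + 2)) := by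
  ext (_ | n)
  · simp [motzkinGF, motzkinM, Nat.cast_add_one_ne_zero]
  · simp only [motzkinGF, coeff_succ_X_mul, coeff_mk, map_add, coeff_smul, smul_eq_mul]
    push_cast
    rw [motzkinM_succ ω n (by positivity), add_sub_cancel_right, add_assoc (j : ℤ) 1 1, one_add_one_eq_two]

noncomputable def motzkinQuad (ω : ℚ) : ℚ⟦X⟧ := 1 + C ω * X + X ^ 2

lemma motzkinQuad_mul_inv (ω : ℚ) : motzkinQuad ω * (motzkinQuad ω)⁻¹ = 1 :=
  PowerSeries.mul_inv_cancel _ (by simp [motzkinQuad])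

theorem subst_motzkinGF (ω : ℚ) (j : ℕ) :
    (motzkinGF ω j).subst (X * (motzkinQuad ω)⁻¹) = X ^ j * motzkinQuad ω := by
  set u := X * (motzkinQuad ω)⁻¹
  have hu : HasSubst u := HasSubst.of_constantCoeff_zero' (by simp [u])
  set S : ℕ → ℚ⟦X⟧ := fun j ↦ substAlgHom hu (motzkinGF ω j)
  have hS_zero : S 0 = 1 + u * (ω • S 0 + S 1) := by
    simp only [S]; conv_lhs => rw [motzkinGF_zero]
    simp [substAlgHom_X]
  have hS_succ (j : ℕ) : S (j + 1) = u * (S j + ω • S (j + 1) + S (j + 2)) := by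
    simp only [S]; conv_lhs => rw [motzkinGF_succ]
    simp [substAlgHom_X]
  have hQ := motzkinQuad_mul_inv ω
  have hQ_def : motzkinQuad ω = 1 + C ω * X + X ^ 2 := rfl
  have hdiff := eq_zero_of_three_term_recurrence (c := ω) (v := (motzkinQuad ω)⁻¹)
    (D := fun j ↦ S j - X ^ j * motzkinQuad ω) ?_ ?_ j
  · rw [← coe_substAlgHom hu]; exact sub_eq_zero.mp hdiff
  · simp only [smul_eq_C_mul] at hS_zero ⊢
    linear_combination hS_zero + (X * (C ω + X)) * hQ - hQ_def
  · intro j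
    simp only [smul_eq_C_mul] at hS_succ ⊢
    linear_combination hS_succ j + X ^ (j + 1) * motzkinQuad ω * hQ
      - X ^ (j + 1) * motzkinQuad ω * (motzkinQuad ω)⁻¹ * hQ_def

theorem minv_from_motzkin (ω : ℚ) (i j : ℕ) (h : j ≤ i) :
    minv ω i j = ∑ k ∈ Finset.range (i - j + 1), minv ω (i+1) (j+1+k) * motzkinM ω k 0 := by
  set Q := motzkinQuad ω
  have hminv (i j : ℕ) : minv ω i j = coeff i (X ^ j * Q⁻¹ ^ (j + 1)) := rfl
  have hsum := coeff_mul_subst_eq_sum (F := motzkinGF ω 0) (u := X * Q⁻¹) (by simp)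
    (dvd_mul_right (X ^ (j + 1)) (Q⁻¹ ^ (j + 2))) (n := i + 1) (N := i - j) (by omega)
  have hcancel : X ^ (j + 1) * Q⁻¹ ^ (j + 2) * (X ^ 0 * Q) = X * (X ^ j * Q⁻¹ ^ (j + 1)) := by
    linear_combination X ^ (j + 1) * Q⁻¹ ^ (j + 1) * motzkinQuad_mul_inv ω
  rw [subst_motzkinGF, hcancel, coeff_succ_X_mul, ← hminv] at hsum
  rw [hsum]
  refine sum_congr rfl fun k _ ↦ ?_
  rw [motzkinGF, coeff_mk, Nat.cast_zero, mul_comm, hminv]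
  congr 2
  ring
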